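/- Identify ℝ³ with purely imaginary quaternions, and define L(x,y) = (xyx/2, 2x⁻¹) for x, y purely imaginary with x ≠ 0. If (q,p) = L⁻¹-image, i.e., L⁻¹(q,p) = (2p⁻¹, pqp/2), then on the zero-energy surface H(q,p) = 0 (equivalently |p|²|q| = 2 with q≠0): y := pqp/2 = q/|q| − ⟨q,p⟩p, and the Laplace–Runge–Lenz vector A = p×(q×p) − q/|q| satisfies A = y; moreover K₀(q,p) := |q||p|² − 2 pulled back by L equals 2|y| − 2. -/
import Mathlib


noncomputable section

open Quaternion

/-- Euclidean inner product of two purely imaginary quaternions: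
⟨a,b⟩ = −Re(a·b). -/
def innerIm (a b : ℍ[ℝ]) : ℝ := -(a * b).re

/-- Cross product of two purely imaginary quaternions: a×b = (ab − ba)/2. -/
def crossIm (a b : ℍ[ℝ]) : ℍ[ℝ] := (a * b - b * a) / 2

/-- On the zero-energy surface |p|²|q| = 2, with q,p purely imaginary
quaternions, the map L⁻¹(q,p) = (2p⁻¹, pqp/2) satisfies:
y = pqp/2 = q/|q| − ⟨q,p⟩p, the Laplace–Runge–Lenz vector
A = p×(q×p) − q/|q| equals y, and K₀ = |q||p|² − 2 pulls back to 2|y| − 2. -/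
theorem parabolic_regularization_identities
    (q p : ℍ[ℝ]) (hq : q.re = 0) (hp : p.re = 0)
    (hq0 : q ≠ 0) (hp0 : p ≠ 0)
    (henergy : ‖p‖ ^ 2 * ‖q‖ = 2) :
    p * q * p / 2 = ‖q‖⁻¹ • q - innerIm q p • p ∧
    crossIm p (crossIm q p) - ‖q‖⁻¹ • q = p * q * p / 2 ∧
    ‖q‖ * ‖p‖ ^ 2 - 2 = 2 * ‖p * q * p / 2‖ - 2 := by
  have hqn : ‖q‖ ≠ 0 := norm_ne_zero_iff.mpr hq0
  have hsq : star q = -q := Quaternion.star_eq_neg.mpr hq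
  have hsp : star p = -p := Quaternion.star_eq_neg.mpr hp
  have h2 : ((2 : ℍ[ℝ]) = ((2:ℝ) : ℍ[ℝ])) := by norm_cast
  have hdiv : ∀ x : ℍ[ℝ], x / 2 = (2⁻¹ : ℝ) • x := fun x => by
    rw [div_eq_mul_inv, h2, ← Quaternion.coe_inv, Quaternion.mul_coe_eq_smul]
  have hp2 : p * p = -((‖p‖ ^ 2 : ℝ) : ℍ[ℝ]) := by
    have h := p.star_mul_self
    rw [hsp, neg_mul] at h
    rw [← neg_eq_iff_eq_neg.mpr h.symm]
    norm_cast
    rw [Quaternion.normSq_eq_norm_mul_self, sq]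
  have hanti : p * q = ((2 * (q * p).re : ℝ) : ℍ[ℝ]) - q * p := by
    have h := (q * p).self_add_star'
    rw [star_mul, hsq, hsp, neg_mul_neg] at h
    rw [← h]; abel
  have key : p * q * p = (‖p‖ ^ 2 : ℝ) • q - (2 * innerIm q p) • p := by
    have e1 : p * q * p = ((2 * (q * p).re : ℝ) : ℍ[ℝ]) * p - q * (p * p) := by
      rw [hanti]; noncomm_ring
    rw [e1, hp2, Quaternion.coe_mul_eq_smul, mul_neg, Quaternion.mul_coe_eq_smul]
    simp only [innerIm]
    module
  have hscal : ‖p‖ ^ 2 = 2 * ‖q‖⁻¹ := by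
    field_simp
    linarith [henergy]
  refine ⟨?_, ?_, ?_⟩
  · rw [key, hscal, hdiv]
    module
  · unfold crossIm
    have expand : p * ((q * p - p * q) / 2) - (q * p - p * q) / 2 * p
        = (2⁻¹ : ℝ) • (p * q * p + p * q * p - p * (p * q) - q * p * p) := by
      rw [hdiv]
      simp only [smul_sub, mul_smul_comm, smul_mul_assoc, mul_sub, sub_mul, mul_assoc]
      module
    have e3 : p * (p * q) = -((‖p‖ ^ 2 : ℝ) • q) := by
      rw [← mul_assoc, hp2, neg_mul, Quaternion.coe_mul_eq_smul]
    have e4 : q * p * p = -((‖p‖ ^ 2 : ℝ) • q) := by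
      rw [mul_assoc, hp2, mul_neg, Quaternion.mul_coe_eq_smul]
    rw [expand, e3, e4, key, hscal, hdiv, hdiv]
    module
  · have h1 : ‖p * q * p / 2‖ = 1 := by
      rw [norm_div, norm_mul, norm_mul, h2, Quaternion.norm_coe]
      simp only [Real.norm_ofNat]
      nlinarith [henergy, norm_nonneg p, norm_nonneg q]
    rw [h1]
    nlinarith [henergy]


end
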